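/- Let N be a positive integer, I ⊆ [N], T > 0 and c > 0 reals, and γ ∈ (0, T²]. For each x ∈ I let q_·(x) : [N] → ℝ be a nonnegative function with ∑_{z∈[N]} q_z(x) ≤ T. Let R be a random subset of [N] including each element independently with probability γ/T², and define J = { x ∈ I : x ∈ R and ∑_{z ∈ R, z ≠ x} q_z(x) > c/T }. Then Pr[ |J| ≤ 10·|I|·γ²/(c·T²) ] ≥ 0.9. -/

import Mathlib

/-! Call `x ∈ I` bad if `x ∈ R` and `∑_{z ∈ R, z ≠ x} q_z(x) > c/T`. Badness of `x` forces
`∑_{z ≠ x} 1[x ∈ R] 1[z ∈ R] q_z(x) ≥ c/T`; as distinct coordinates of `R` are independent,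
this sum has expectation `p² ∑_{z ≠ x} q_z(x) ≤ p² T` with `p = γ/T²`, so by Markov `x` is bad
with probability at most `γ²/(cT²)`. Hence `E|J| ≤ |I| γ²/(cT²)`, and Markov's inequality for
`|J|` at ten times its mean bound gives the claim. -/

open MeasureTheory ProbabilityTheory Finset
open scoped ENNReal

section CountMarkov

variable {Ω ι : Type*} {P : ι → Ω → Prop} [∀ x ω, Decidable (P x ω)] {I : Finset ι}

lemma natCast_card_filter_eq_sum_indicator (ω : Ω) :
    (#{x ∈ I | P x ω} : ℝ) = ∑ x ∈ I, {ω | P x ω}.indicator 1 ω := by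
  rw [Finset.natCast_card_filter]
  simp only [Set.indicator_apply, Set.mem_ofPred_eq, Pi.one_apply]

variable [MeasurableSpace Ω] {μ : Measure Ω}

lemma integrable_card_filter [IsFiniteMeasure μ] (hP : ∀ x ∈ I, MeasurableSet {ω | P x ω}) :
    Integrable (fun ω => (#{x ∈ I | P x ω} : ℝ)) μ := by
  simp_rw [natCast_card_filter_eq_sum_indicator]
  exact integrable_finsetSum _ fun x hx => (integrable_const 1).indicator (hP x hx)

lemma integral_card_filter [IsFiniteMeasure μ] (hP : ∀ x ∈ I, MeasurableSet {ω | P x ω}) :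
    ∫ ω, (#{x ∈ I | P x ω} : ℝ) ∂μ = ∑ x ∈ I, μ.real {ω | P x ω} := by
  simp_rw [natCast_card_filter_eq_sum_indicator]
  rw [integral_finsetSum _ fun x hx => (integrable_const 1).indicator (hP x hx)]
  exact Finset.sum_congr rfl fun x hx => integral_indicator_one (hP x hx)

lemma one_sub_inv_le_measureReal_card_filter_le [IsProbabilityMeasure μ]
    (hP : ∀ x ∈ I, MeasurableSet {ω | P x ω}) {b : ℝ} (hb : 0 < b)
    (hμP : ∀ x ∈ I, μ.real {ω | P x ω} ≤ b) {k : ℝ} (hk : 0 < k) :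
    1 - k⁻¹ ≤ μ.real {ω | (#{x ∈ I | P x ω} : ℝ) ≤ k * #I * b} := by
  rcases I.eq_empty_or_nonempty with rfl | hI
  · simp [hk.le]
  set t : ℝ := k * #I * b
  have ht : 0 < t := by have := hI.card_pos; positivity
  have hmarkov : t * μ.real {ω | t ≤ (#{x ∈ I | P x ω} : ℝ)} ≤ #I * b :=
    calc _ ≤ ∫ ω, (#{x ∈ I | P x ω} : ℝ) ∂μ :=
          mul_meas_ge_le_integral_of_nonneg (ae_of_all _ fun _ => by positivity)
            (integrable_card_filter hP) t
      _ = ∑ x ∈ I, μ.real {ω | P x ω} := integral_card_filter hP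
      _ ≤ #I * b := by simpa using Finset.sum_le_sum hμP
  have hcompl : μ.real {ω | t ≤ (#{x ∈ I | P x ω} : ℝ)}ᶜ
      = 1 - μ.real {ω | t ≤ (#{x ∈ I | P x ω} : ℝ)} :=
    probReal_compl_eq_one_sub₀
      ((integrable_card_filter hP).aemeasurable.nullMeasurable measurableSet_Ici)
  have hsub : {ω | t ≤ (#{x ∈ I | P x ω} : ℝ)}ᶜ ⊆ {ω | (#{x ∈ I | P x ω} : ℝ) ≤ t} :=
    fun ω (hω : ¬t ≤ (#{x ∈ I | P x ω} : ℝ)) => (lt_of_not_ge hω).le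
  have hkt : k⁻¹ = #I * b / t := by
    have := hI.card_pos; simp only [t]; field_simp
  calc 1 - k⁻¹ ≤ 1 - μ.real {ω | t ≤ (#{x ∈ I | P x ω} : ℝ)} := by
        rw [hkt, sub_le_sub_iff_left, le_div_iff₀ ht, mul_comm]; exact hmarkov
    _ = _ := hcompl.symm
    _ ≤ _ := measureReal_mono hsub

end CountMarkov

section ProductBernoulli

variable {ι : Type*} [Fintype ι] (ν : Measure Bool) [IsProbabilityMeasure ν]

lemma measureReal_pi_eval_true_and_eval_true {x z : ι} (hxz : x ≠ z) :
    (Measure.pi fun _ : ι => ν).real {R | R x = true ∧ R z = true} = ν.real {true} ^ 2 := by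
  have hindep : IndepFun (fun R : ι → Bool => R x) (fun R => R z) (Measure.pi fun _ => ν) :=
    (iIndepFun_pi (X := fun _ => id) fun _ => aemeasurable_id).indepFun hxz
  have hmarg (y : ι) :
      (Measure.pi fun _ => ν) ((fun R : ι → Bool => R y) ⁻¹' {true}) = ν {true} :=
    (measurePreserving_eval _ y).measure_preimage (measurableSet_singleton _).nullMeasurableSet
  have hinter := hindep.measure_inter_preimage_eq_mul {true} {true}
    (measurableSet_singleton _) (measurableSet_singleton _)
  rw [hmarg, hmarg] at hinter
  simp only [measureReal_def, sq, ← ENNReal.toReal_mul, ← hinter]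
  rfl

lemma measureReal_pi_eval_true_and_lt_sum_le [DecidableEq ι] {w : ι → ℝ} (hw : ∀ z, 0 ≤ w z)
    (x : ι) {s : ℝ} (hs : 0 < s) :
    (Measure.pi fun _ : ι => ν).real {R | R x = true ∧ s < ∑ z with R z = true ∧ z ≠ x, w z}
      ≤ ν.real {true} ^ 2 * (∑ z, w z) / s := by
  set μ := Measure.pi fun _ : ι => ν
  let both (z : ι) : Set (ι → Bool) := {R | R x = true ∧ R z = true}
  let f (R : ι → Bool) : ℝ := ∑ z ∈ univ.erase x, (both z).indicator (fun _ => w z) R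
  have hf_int : Integrable f μ := Integrable.of_finite
  have hsub : {R | R x = true ∧ s < ∑ z with R z = true ∧ z ≠ x, w z} ⊆ {R | s ≤ f R} := by
    rintro R ⟨hRx, hlt⟩
    refine le_of_lt (hlt.trans_eq ?_)
    simp only [f, Finset.sum_indicator_eq_sum_filter]
    congr 1
    ext z
    simp [both, hRx, and_comm]
  have hf_integral : ∫ R, f R ∂μ ≤ ν.real {true} ^ 2 * ∑ z, w z := by
    rw [integral_finsetSum _ fun z _ => Integrable.of_finite, Finset.mul_sum]
    calc ∑ z ∈ univ.erase x, ∫ R, (both z).indicator (fun _ => w z) R ∂μ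
        = ∑ z ∈ univ.erase x, ν.real {true} ^ 2 * w z := by
          refine Finset.sum_congr rfl fun z hz => ?_
          rw [integral_indicator_const _ MeasurableSet.of_discrete,
            measureReal_pi_eval_true_and_eval_true ν (Finset.ne_of_mem_erase hz).symm, smul_eq_mul]
      _ ≤ _ := Finset.sum_le_sum_of_subset_of_nonneg (Finset.erase_subset _ _)
          fun z _ _ => mul_nonneg (sq_nonneg _) (hw z)
  rw [le_div_iff₀ hs, mul_comm]
  calc s * μ.real _ ≤ s * μ.real {R | s ≤ f R} :=
        mul_le_mul_of_nonneg_left (measureReal_mono hsub) hs.le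
    _ ≤ ∫ R, f R ∂μ := mul_meas_ge_le_integral_of_nonneg (ae_of_all _ fun R =>
        Finset.sum_nonneg fun z _ => Set.indicator_nonneg (fun _ _ => hw z) R) hf_int s
    _ ≤ _ := hf_integral

end ProductBernoulli

lemma nine_tenths_le_measure_card_bad_le {ι : Type*} [Fintype ι] [DecidableEq ι]
    (I : Finset ι) {T c γ : ℝ} (hT : 0 < T) (hc : 0 < c) (hγ0 : 0 < γ) {q : ι → ι → ℝ}
    (hq : ∀ x ∈ I, ∀ z, 0 ≤ q x z) (hsum : ∀ x ∈ I, ∑ z, q x z ≤ T)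
    (ν : Measure Bool) [IsProbabilityMeasure ν] (hν : ν.real {true} ≤ γ / T ^ 2) :
    (9 : ℝ≥0∞) / 10 ≤ (Measure.pi fun _ : ι => ν)
      {R | (#{x ∈ I | R x = true ∧ c / T < ∑ z with R z = true ∧ z ≠ x, q x z} : ℝ)
        ≤ 10 * #I * γ ^ 2 / (c * T ^ 2)} := by
  have hbad : ∀ x ∈ I, (Measure.pi fun _ => ν).real
      {R | R x = true ∧ c / T < ∑ z with R z = true ∧ z ≠ x, q x z} ≤ γ ^ 2 / (c * T ^ 2) := by
    intro x hx
    calc _ ≤ ν.real {true} ^ 2 * (∑ z, q x z) / (c / T) :=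
          measureReal_pi_eval_true_and_lt_sum_le ν (hq x hx) x (by positivity)
      _ ≤ (γ / T ^ 2) ^ 2 * T / (c / T) := by
          gcongr
          exacts [Finset.sum_nonneg fun z _ => hq x hx z, hsum x hx]
      _ = γ ^ 2 / (c * T ^ 2) := by field_simp
  have hgood := one_sub_inv_le_measureReal_card_filter_le (μ := Measure.pi fun _ => ν)
    (fun _ _ => MeasurableSet.of_discrete) (by positivity) hbad (by norm_num : (0 : ℝ) < 10)
  have hnine : (9 : ℝ≥0∞) / 10 = ENNReal.ofReal (1 - 10⁻¹) := by
    rw [show (1 : ℝ) - 10⁻¹ = 9 / 10 by norm_num, ENNReal.ofReal_div_of_pos (by norm_num)]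
    simp
  rw [← ofReal_measureReal, hnine]
  simpa only [mul_div_assoc] using ENNReal.ofReal_le_ofReal hgood

/-- Markov bound for the bad set `J`: with `R ⊆ [N]` a random subset including each
element independently with probability `γ/T²`, and
`J = {x ∈ I : x ∈ R and ∑_{z ∈ R, z ≠ x} q_z(x) > c/T}`, we have
`Pr[ |J| ≤ 10·|I|·γ²/(c·T²) ] ≥ 0.9`. -/
theorem bad_set_markov (N : ℕ) (I : Finset (Fin N)) (T c γ : ℝ)
    (hT : 0 < T) (hc : 0 < c) (hγ0 : 0 < γ) (hγ : γ ≤ T ^ 2)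
    (q : Fin N → Fin N → ℝ) (hq : ∀ x ∈ I, ∀ z, 0 ≤ q x z)
    (hsum : ∀ x ∈ I, ∑ z, q x z ≤ T) :
    (9 : ℝ≥0∞) / 10 ≤
      (Measure.pi fun _ : Fin N =>
          (PMF.bernoulli (Real.toNNReal (γ / T ^ 2))
            (Real.toNNReal_le_one.mpr ((div_le_one (by positivity)).mpr hγ))).toMeasure)
        {R : Fin N → Bool |
          (((I.filter fun x => R x = true ∧
              c / T < ∑ z ∈ Finset.univ.filter (fun z => R z = true ∧ z ≠ x), q x z).card : ℝ))
            ≤ 10 * (I.card : ℝ) * γ ^ 2 / (c * T ^ 2)} := by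
  refine nine_tenths_le_measure_card_bad_le I hT hc hγ0 hq hsum _ (le_of_eq ?_)
  simp only [measureReal_def, PMF.toMeasure_apply_singleton _ _ (measurableSet_singleton _)]
  -- `PMF.bernoulli p _ true` unfolds to `p`
  exact Real.coe_toNNReal (γ / T ^ 2) (by positivity)
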